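/- Let Z ∈ ℝ^{n×m} admit a decomposition Z = L Σ Rᵀ, where L ∈ ℝ^{n×k} and R ∈ ℝ^{m×k} satisfy LᵀL = I_k and RᵀR = I_k, and Σ ∈ ℝ^{k×k} is diagonal with nonnegative diagonal entries. Set U = L Σ^{1/2} and V = R Σ^{1/2}, where Σ^{1/2} is the entrywise square root of Σ. Then Z = U Vᵀ and (1/2)(‖U‖_F² + ‖V‖_F²) = Tr(Σ) = ‖Z‖_*. Consequently, the minimum of (1/2)(‖U‖_F² + ‖V‖_F²) over all factorizations Z = U Vᵀ with U ∈ ℝ^{n×k}, V ∈ ℝ^{m×k} equals ‖Z‖_* and is attained. -/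

import Mathlib

/-!
The balanced factor pair `U = L Σ^{1/2}`, `V = R Σ^{1/2}` has `UᵀU = VᵀV = Σ`, and `ZᵀZ = R Σ² Rᵀ`
has square root `R Σ Rᵀ`, whose trace is `Tr Σ`. For the lower bound, any factorization
`Z = U' V'ᵀ` gives `Tr Σ = Tr (Lᵀ Z R) = Tr ((LᵀU') (RᵀV')ᵀ)`; this is at most
`½ (‖LᵀU'‖_F² + ‖RᵀV'‖_F²)` by AM-GM, and multiplying by `Lᵀ` or `Rᵀ` (orthonormal columns)
does not increase the Frobenius norm, because `1 - L Lᵀ` is an orthogonal projection.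
-/

open Matrix

/-- The nuclear norm of a real matrix: the trace of the positive-semidefinite
square root of `Xᵀ * X` (i.e. the sum of the singular values of `X`). -/
noncomputable def nuclearNorm {n m : ℕ} (X : Matrix (Fin n) (Fin m) ℝ) : ℝ :=
  ((Matrix.posSemidef_conjTranspose_mul_self X).1.eigenvectorUnitary.1 *
    Matrix.diagonal (fun i => Real.sqrt ((Matrix.posSemidef_conjTranspose_mul_self X).1.eigenvalues i)) *
    (star (Matrix.posSemidef_conjTranspose_mul_self X).1.eigenvectorUnitary : Matrix (Fin m) (Fin m) ℝ)).trace

namespace Matrix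

variable {l m n : Type*} [Fintype m] [Fintype n]

lemma trace_transpose_mul_self_nonneg (A : Matrix m n ℝ) : 0 ≤ (Aᵀ * A).trace :=
  (posSemidef_conjTranspose_mul_self A).trace_nonneg

lemma trace_mul_transpose_le (A B : Matrix m n ℝ) :
    (A * Bᵀ).trace ≤ (1 / 2) * ((Aᵀ * A).trace + (Bᵀ * B).trace) := by
  have hAB : (Bᵀ * A).trace = (A * Bᵀ).trace := trace_mul_comm _ _
  have hBA : (Aᵀ * B).trace = (A * Bᵀ).trace := by
    rw [← hAB, ← trace_transpose, transpose_mul, transpose_transpose]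
  have h := trace_transpose_mul_self_nonneg (A - B)
  simp only [transpose_sub, Matrix.sub_mul, Matrix.mul_sub, trace_sub, hAB, hBA] at h
  linarith

lemma trace_transpose_mul_self_le_of_orthonormal [Fintype l] [DecidableEq n] {P : Matrix m n ℝ}
    (hP : Pᵀ * P = 1) (W : Matrix m l ℝ) :
    ((Pᵀ * W)ᵀ * (Pᵀ * W)).trace ≤ (Wᵀ * W).trace := by
  classical
  set Q : Matrix m m ℝ := 1 - P * Pᵀ
  have hQ_symm : Qᵀ = Q := by simp [Q, transpose_sub]
  have hQ_idem : Q * Q = Q := by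
    simp only [Q, sub_mul, mul_sub, one_mul, mul_one, Matrix.mul_assoc, ← Matrix.mul_assoc Pᵀ, hP,
      Matrix.one_mul]
    abel
  have hgram : (Q * W)ᵀ * (Q * W) = Wᵀ * W - (Pᵀ * W)ᵀ * (Pᵀ * W) := by
    rw [transpose_mul, hQ_symm, Matrix.mul_assoc, ← Matrix.mul_assoc Q, hQ_idem]
    simp only [Q, Matrix.sub_mul, Matrix.mul_sub, Matrix.one_mul, Matrix.mul_assoc, transpose_mul,
      transpose_transpose]
  have h := trace_transpose_mul_self_nonneg (Q * W)
  rw [hgram, trace_sub] at h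
  linarith

lemma trace_transpose_mul_mul_le {k p q r : Type*} [Fintype k] [Fintype p] [Fintype q]
    [Fintype r] [DecidableEq r] {P : Matrix p r ℝ} {Q : Matrix q r ℝ}
    (hP : Pᵀ * P = 1) (hQ : Qᵀ * Q = 1) (U : Matrix p k ℝ) (V : Matrix q k ℝ) :
    (Pᵀ * (U * Vᵀ) * Q).trace ≤ (1 / 2) * ((Uᵀ * U).trace + (Vᵀ * V).trace) := by
  have hsplit : Pᵀ * (U * Vᵀ) * Q = (Pᵀ * U) * (Qᵀ * V)ᵀ := by
    simp only [transpose_mul, transpose_transpose, Matrix.mul_assoc]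
  rw [hsplit]
  have hU := trace_transpose_mul_self_le_of_orthonormal hP U
  have hV := trace_transpose_mul_self_le_of_orthonormal hQ V
  linarith [trace_mul_transpose_le (Pᵀ * U) (Qᵀ * V)]

lemma transpose_mul_self_of_orthonormal [DecidableEq n] {P : Matrix m n ℝ} (hP : Pᵀ * P = 1)
    (A : Matrix n l ℝ) : (P * A)ᵀ * (P * A) = Aᵀ * A := by
  rw [transpose_mul, Matrix.mul_assoc, ← Matrix.mul_assoc Pᵀ, hP, Matrix.one_mul]

lemma diagonal_sqrt_mul_self [DecidableEq n] {σ : n → ℝ} (hσ : ∀ i, 0 ≤ σ i) :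
    diagonal (fun i => √(σ i)) * diagonal (fun i => √(σ i)) = diagonal σ := by
  rw [diagonal_mul_diagonal]
  exact congrArg diagonal (funext fun i => Real.mul_self_sqrt (hσ i))

open scoped MatrixOrder in
lemma sqrt_transpose_mul_self_eq {r : Type*} [Fintype r] [DecidableEq n] [DecidableEq r]
    {L : Matrix m r ℝ} {R : Matrix n r ℝ} {D : Matrix r r ℝ} (hD : D.PosSemidef)
    (hL : Lᵀ * L = 1) (hR : Rᵀ * R = 1) :
    CFC.sqrt ((L * D * Rᵀ)ᴴ * (L * D * Rᵀ)) = R * D * Rᵀ := by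
  have hDt : Dᵀ = D := by simpa using hD.1.eq
  have hsq : (R * D * Rᵀ) * (R * D * Rᵀ) = (L * D * Rᵀ)ᴴ * (L * D * Rᵀ) := by
    simp only [conjTranspose_eq_transpose_of_trivial, transpose_mul, transpose_transpose, hDt,
      Matrix.mul_assoc, ← Matrix.mul_assoc Rᵀ R, ← Matrix.mul_assoc Lᵀ L, hL, hR, Matrix.one_mul]
  have hpsd : (R * D * Rᵀ).PosSemidef := by simpa using hD.mul_mul_conjTranspose_same R
  exact CFC.sqrt_unique hsq hpsd.nonneg

end Matrix

open scoped MatrixOrder in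
lemma nuclearNorm_eq_trace_sqrt {n m : ℕ} (X : Matrix (Fin n) (Fin m) ℝ) :
    nuclearNorm X = (CFC.sqrt (Xᴴ * X)).trace := by
  have hH := posSemidef_conjTranspose_mul_self X
  rw [CFC.sqrt_eq_cfc, cfc_nnreal_eq_real _ (Xᴴ * X), hH.1.cfc_eq, nuclearNorm]
  simp only [IsHermitian.cfc, Unitary.conjStarAlgAut_apply, Function.comp_def, Real.coe_sqrt,
    Real.coe_toNNReal']
  congr 4 with i
  exact congrArg Real.sqrt (max_eq_left (hH.eigenvalues_nonneg i)).symm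

lemma nuclearNorm_mul_mul_transpose {n m k : ℕ} {L : Matrix (Fin n) (Fin k) ℝ}
    {R : Matrix (Fin m) (Fin k) ℝ} {D : Matrix (Fin k) (Fin k) ℝ} (hD : D.PosSemidef)
    (hL : Lᵀ * L = 1) (hR : Rᵀ * R = 1) :
    nuclearNorm (L * D * Rᵀ) = D.trace := by
  rw [nuclearNorm_eq_trace_sqrt, sqrt_transpose_mul_self_eq hD hL hR, trace_mul_comm,
    ← Matrix.mul_assoc, hR, Matrix.one_mul]

/-- Given `Z = L Σ Rᵀ` with orthonormal columns `L, R` and diagonal nonnegative `Σ`,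
setting `U = L Σ^{1/2}`, `V = R Σ^{1/2}` gives `Z = U Vᵀ`,
`(1/2)(‖U‖_F² + ‖V‖_F²) = Tr(Σ) = ‖Z‖₊`, and the minimum of `(1/2)(‖U‖_F² + ‖V‖_F²)`
over all factorizations `Z = U Vᵀ` equals `‖Z‖₊` and is attained. -/
theorem nuclearNorm_factorization_attained {n m k : ℕ}
    (Z : Matrix (Fin n) (Fin m) ℝ)
    (L : Matrix (Fin n) (Fin k) ℝ) (R : Matrix (Fin m) (Fin k) ℝ)
    (σ : Fin k → ℝ) (hσ : ∀ i, 0 ≤ σ i)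
    (hZ : Z = L * Matrix.diagonal σ * Rᵀ)
    (hL : Lᵀ * L = 1) (hR : Rᵀ * R = 1) :
    let U := L * Matrix.diagonal (fun i => Real.sqrt (σ i))
    let V := R * Matrix.diagonal (fun i => Real.sqrt (σ i))
    Z = U * Vᵀ ∧
    (1 / 2) * ((Uᵀ * U).trace + (Vᵀ * V).trace) = (Matrix.diagonal σ).trace ∧
    (Matrix.diagonal σ).trace = nuclearNorm Z ∧
    IsLeast {c : ℝ | ∃ (U' : Matrix (Fin n) (Fin k) ℝ) (V' : Matrix (Fin m) (Fin k) ℝ),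
        Z = U' * V'ᵀ ∧ c = (1 / 2) * ((U'ᵀ * U').trace + (V'ᵀ * V').trace)}
      (nuclearNorm Z) := by
  intro U V
  have hSS := diagonal_sqrt_mul_self hσ
  have hSt : (diagonal fun i => √(σ i))ᵀ = diagonal fun i => √(σ i) := diagonal_transpose _
  have hfac : Z = U * Vᵀ := by
    simp only [U, V]
    rw [hZ, transpose_mul, hSt, ← hSS]
    simp only [Matrix.mul_assoc]
  have hcost : (1 / 2) * ((Uᵀ * U).trace + (Vᵀ * V).trace) = (diagonal σ).trace := by
    rw [transpose_mul_self_of_orthonormal hL, transpose_mul_self_of_orthonormal hR, hSt, hSS]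
    ring
  have hnuc : (diagonal σ).trace = nuclearNorm Z := by
    rw [hZ, nuclearNorm_mul_mul_transpose (PosSemidef.diagonal hσ) hL hR]
  refine ⟨hfac, hcost, hnuc, ⟨U, V, hfac, by rw [← hnuc, hcost]⟩, ?_⟩
  rintro c ⟨U', V', hfac', rfl⟩
  calc nuclearNorm Z = (Lᵀ * Z * R).trace := by
        rw [← hnuc, hZ, ← Matrix.mul_assoc, ← Matrix.mul_assoc, hL, Matrix.one_mul,
          Matrix.mul_assoc, hR, Matrix.mul_one]
    _ ≤ _ := hfac' ▸ trace_transpose_mul_mul_le hL hR U' V'
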